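/- Let π ∈ Λ be either a symmetric irreducible element of Λ or π = t + 2 + t⁻¹, let A = ⊕_{i∈I} Λ/(π^{n_i}) with I a nonempty finite index set and all n_i > 0, let n = max{n_i : i ∈ I}, and let φ be a non-degenerate hermitian form on A. Then there exists γ ∈ A with φ(γ,γ) = P/πⁿ mod Λ for some P ∈ Λ coprime to π. -/

import Mathlib

open LaurentPolynomial

set_option maxHeartbeats 1000000
set_option synthInstance.maxHeartbeats 400000

noncomputable section

/-- `Λ = ℚ[t,t⁻¹]`, the ring of Laurent polynomials over `ℚ`. -/
abbrev Λ : Type := LaurentPolynomial ℚ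

/-- The variable `t` of `Λ`. -/
def tΛ : Λ := T 1

/-- The involution `P(t) ↦ P(t⁻¹)` of `Λ`. -/
def lbar : Λ →+* Λ := (invert : Λ ≃ₐ[ℚ] Λ).toRingEquiv.toRingHom

/-- `P ∈ Λ` is symmetric if `P(t⁻¹) = P(t)`. -/
def SymmL (P : Λ) : Prop := lbar P = P

/-- The fraction field `ℚ(t)` of `Λ`. -/
abbrev KΛ : Type := FractionRing Λ

/-- The involution of `ℚ(t)` extending that of `Λ`. -/
def kbar : KΛ →+* KΛ :=
  (IsFractionRing.ringEquivOfRingEquiv (A := Λ) (B := Λ) (K := KΛ) (L := KΛ)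
    (invert : Λ ≃ₐ[ℚ] Λ).toRingEquiv).toRingHom

lemma kbar_algebraMap (P : Λ) : kbar (algebraMap Λ KΛ P) = algebraMap Λ KΛ (lbar P) := by
  simp [kbar, lbar]

/-- The image of `Λ` inside `ℚ(t)`, as a `Λ`-submodule of `ℚ(t)`. -/
def ΛinK : Submodule Λ KΛ := LinearMap.range (Algebra.linearMap Λ KΛ)

/-- The quotient `Λ`-module `ℚ(t)/Λ`. -/
abbrev QL : Type := KΛ ⧸ ΛinK

/-- The class in `ℚ(t)/Λ` of an element of `ℚ(t)`. -/
abbrev QLmk : KΛ →ₗ[Λ] QL := ΛinK.mkQ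

/-- The class of the fraction `P/Q` in `ℚ(t)/Λ`, for `P Q : Λ`. -/
def fracQ (P Q : Λ) : QL := QLmk (algebraMap Λ KΛ P / algebraMap Λ KΛ Q)

/-- The involution of `ℚ(t)/Λ` induced by `P(t) ↦ P(t⁻¹)`. -/
def qbar : QL → QL := fun x =>
  Quotient.liftOn x (fun a => QLmk (kbar a)) (by
    intro a b h
    obtain ⟨r, hr⟩ := (Submodule.quotientRel_def (p := ΛinK)).mp h
    apply (Submodule.Quotient.eq _).2
    refine ⟨lbar r, ?_⟩
    rw [← map_sub, ← hr]
    exact (kbar_algebraMap _).symm)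

lemma qbar_mk (a : KΛ) : qbar (QLmk a) = QLmk (kbar a) := rfl

/-- Evaluation of a Laurent polynomial at a nonzero rational number. -/
def evalL (q : ℚˣ) : Λ →ₐ[ℚ] ℚ :=
  AddMonoidAlgebra.lift ℚ ℚ ℤ ((Units.coeHom ℚ).comp (zpowersHom ℚˣ q))

/-- A hermitian form on a `Λ`-module `A`, with values in `ℚ(t)/Λ`:
it is `Λ`-linear in the first variable and conjugate-symmetric (hence
semilinear with respect to the involution in the second variable). -/
structure HermForm (A : Type*) [AddCommGroup A] [Module Λ A] where
  bil : A → A → QL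
  add_left : ∀ x y z : A, bil (x + y) z = bil x z + bil y z
  smul_left : ∀ (r : Λ) (x y : A), bil (r • x) y = r • bil x y
  conj_symm : ∀ x y : A, bil x y = qbar (bil y x)

/-- A hermitian form is non-degenerate if `φ(x,y) = 0` for all `y` implies `x = 0`. -/
def HermForm.Nondeg {A : Type*} [AddCommGroup A] [Module Λ A] (φ : HermForm A) : Prop :=
  ∀ x : A, (∀ y : A, φ.bil x y = 0) → x = 0

/-- Two hermitian forms are isometric if they differ by a `Λ`-module automorphism. -/
def HermForm.Isometric {A : Type*} [AddCommGroup A] [Module Λ A]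
    (φ₁ φ₂ : HermForm A) : Prop :=
  ∃ f : A ≃ₗ[Λ] A, ∀ x y : A, φ₂.bil x y = φ₁.bil (f x) (f y)

/-! Write `π ^ N = p * q` with `p` a prime dividing its conjugate `p̄` (`π` itself, or `t + 1`
when `π = t⁻¹ (t + 1)²`). If `x` generates a summand of maximal order then `q • x ≠ 0`, so by
non-degeneracy `φ(x, y) = a / π ^ N` with `p ∤ a` for some `y`. For `γ = x + c a y` with
`c = 0, 1, 2` the numerator of `φ(γ, γ)` is `s + 2 c a ā + c² a ā b`, a quadratic in `c` whose
linear coefficient is prime to `p`; as `2` is a unit, it cannot vanish modulo `p` at all three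
values. -/

theorem IsLocalization.isPrincipalIdealRing {R S : Type*} [CommRing R] [CommRing S] [Algebra R S]
    (M : Submonoid R) [IsLocalization M S] [IsPrincipalIdealRing R] : IsPrincipalIdealRing S := by
  refine ⟨fun J => ⟨⟨algebraMap R S (Submodule.IsPrincipal.generator (J.under R)), ?_⟩⟩⟩
  have h := IsLocalization.map_under M S J
  rw [← Ideal.span_singleton_generator (J.under R), Ideal.map_span, Set.image_singleton] at h
  exact h.symm

theorem exists_natCast_not_dvd_quadratic {R : Type*} [CommRing R] {p u : R} (hp : Prime p)
    (h2 : ¬ p ∣ 2) (hu : ¬ p ∣ u) (s v : R) :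
    ∃ c : ℕ, ¬ p ∣ s + c * u + c ^ 2 * v := by
  by_contra! h
  have h0 := h 0
  have h1 := h 1
  have h2' := h 2
  push_cast at h0 h1 h2'
  -- `f 2 - f 0 - 2 (f 1 - f 0) = 2 v` for the quadratic `f c = s + c u + c² v`
  have hv : p ∣ 2 * v := by
    have := dvd_sub (dvd_sub h2' h0) ((dvd_sub h1 h0).mul_left 2)
    convert this using 1; ring
  have hv' : p ∣ v := (hp.dvd_or_dvd hv).resolve_left h2
  exact hu (by convert dvd_sub (dvd_sub h1 h0) hv' using 1; ring)

lemma Prime.not_mul_dvd_right {M : Type*} [CommMonoidWithZero M] [IsCancelMulZero M] {p q : M}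
    (hp : Prime p) (hq : q ≠ 0) : ¬ p * q ∣ q := fun h =>
  hp.not_isUnit (isUnit_of_dvd_one ((mul_dvd_mul_iff_right hq).1 (by rwa [one_mul])))

lemma isCoprime_of_not_dvd_of_associated_pow {R : Type*} [CommRing R] [IsBezout R] [IsDomain R]
    {p π P : R} {e : ℕ} (hp : Prime p) (hpe : Associated (p ^ e) π) (hP : ¬ p ∣ P) :
    IsCoprime P π := by
  obtain ⟨u, rfl⟩ := hpe
  rw [isCoprime_mul_unit_right_right u.isUnit]
  exact ((hp.coprime_iff_not_dvd.2 hP).symm).pow_right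

lemma smul_eq_zero_of_forall_dvd {R ι : Type*} [CommRing R] {d : ι → R} {D : R}
    (hd : ∀ i, d i ∣ D) (v : ∀ i, R ⧸ Ideal.span {d i}) : D • v = 0 := by
  funext i
  rw [Pi.smul_apply]
  induction v i using Submodule.Quotient.induction_on with | _ z => ?_
  rw [Pi.zero_apply, ← Submodule.Quotient.mk_smul, Submodule.Quotient.mk_eq_zero, smul_eq_mul,
    Ideal.mem_span_singleton]
  exact (hd i).mul_right z

lemma smul_single_one_eq_zero_iff {R ι : Type*} [CommRing R] [DecidableEq ι] (d : ι → R)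
    (i : ι) (q : R) :
    q • (Pi.single i 1 : ∀ i, R ⧸ Ideal.span {d i}) = 0 ↔ d i ∣ q := by
  rw [← Pi.single_smul, Pi.single_eq_zero_iff, Algebra.smul_def, mul_one,
    Ideal.Quotient.algebraMap_eq, Ideal.Quotient.eq_zero_iff_dvd]

instance : IsPrincipalIdealRing Λ :=
  IsLocalization.isPrincipalIdealRing (Submonoid.powers (Polynomial.X : Polynomial ℚ))

lemma evalL_T (q : ℚˣ) (n : ℤ) : evalL q (T n) = (q : ℚ) ^ n := by
  rw [evalL, T, AddMonoidAlgebra.lift_single]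
  simp [zpowersHom]

lemma not_dvd_two {p : Λ} (hp : Prime p) : ¬ p ∣ 2 := by
  have h2 : IsUnit (2 : Λ) := by
    simpa only [map_ofNat] using (isUnit_of_invertible (2 : ℚ)).map (C : ℚ →+* Λ)
  exact fun h => hp.not_isUnit (isUnit_of_dvd_unit h h2)

lemma prime_T_one_add_one : Prime (T 1 + 1 : Λ) := by
  have h := (IsLocalization.toLocalizationMap (Submonoid.powers (Polynomial.X : Polynomial ℚ))
    Λ).map_prime (Polynomial.prime_X_sub_C (-1))
  have he : algebraMap (Polynomial ℚ) Λ (Polynomial.X - Polynomial.C (-1)) = T 1 + 1 := by simp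
  simp only [IsLocalization.toLocalizationMap_apply, he] at h
  refine h (fun h0 => ?_) (fun hu => ?_)
  · simpa [evalL_T] using congrArg (evalL 1) h0
  · simpa [evalL_T] using (hu.map (evalL (-1))).ne_zero

lemma lbar_T (n : ℤ) : lbar (T n) = T (-n) := by simp [lbar]

lemma tΛ_add_two_add_T_neg_one : tΛ + 2 + T (-1) = T (-1) * (T 1 + 1) ^ 2 := by
  have h : (T (-1) : Λ) * T 1 = 1 := by rw [← T_add]; norm_num
  rw [tΛ]
  linear_combination -(T 1 + 2 : Λ) * h

lemma symmL_tΛ_add_two_add_T_neg_one : SymmL (tΛ + 2 + T (-1)) := by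
  simp only [SymmL, tΛ, map_add, map_ofNat, lbar_T, neg_neg]
  ring

lemma T_one_add_one_dvd_lbar : (T 1 + 1 : Λ) ∣ lbar (T 1 + 1) := by
  refine ⟨T (-1), ?_⟩
  have h : (T (-1) : Λ) * T 1 = 1 := by rw [← T_add]; norm_num
  simp only [map_add, map_one, lbar_T]
  linear_combination -h

lemma exists_prime_associated_pow {π : Λ}
    (hπ : (Irreducible π ∧ SymmL π) ∨ π = tΛ + 2 + T (-1)) :
    ∃ (p : Λ) (e : ℕ), Prime p ∧ p ∣ lbar p ∧ 0 < e ∧ Associated (p ^ e) π := by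
  rcases hπ with ⟨hirr, hsym⟩ | rfl
  · exact ⟨π, 1, hirr.prime, hsym.symm ▸ dvd_rfl, one_pos, by rw [pow_one]⟩
  · refine ⟨T 1 + 1, 2, prime_T_one_add_one, T_one_add_one_dvd_lbar, two_pos, ?_⟩
    rw [tΛ_add_two_add_T_neg_one]
    exact associated_unit_mul_right _ _ (isUnit_T _)

lemma not_dvd_mul_lbar {p a : Λ} (hp : Prime p) (hpbar : p ∣ lbar p) (ha : ¬ p ∣ a) :
    ¬ p ∣ a * lbar a := by
  refine fun h => (hp.dvd_or_dvd h).elim ha fun h' => ha (hpbar.trans ?_)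
  simpa [lbar, involutive_invert a] using map_dvd lbar h'

lemma qbar_add (x y : QL) : qbar (x + y) = qbar x + qbar y := by
  induction x using Submodule.Quotient.induction_on
  induction y using Submodule.Quotient.induction_on
  exact congrArg QLmk (map_add kbar _ _)

lemma qbar_smul (r : Λ) (x : QL) : qbar (r • x) = lbar r • qbar x := by
  induction x using Submodule.Quotient.induction_on with | _ a => ?_
  change QLmk (kbar (r • a)) = lbar r • QLmk (kbar a)
  rw [← map_smul, Algebra.smul_def, Algebra.smul_def, map_mul, kbar_algebraMap]

lemma fracQ_add (P P' Q : Λ) : fracQ P Q + fracQ P' Q = fracQ (P + P') Q := by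
  rw [fracQ, fracQ, fracQ, ← map_add, ← add_div, ← map_add]

lemma smul_fracQ (r P Q : Λ) : r • fracQ P Q = fracQ (r * P) Q := by
  rw [fracQ, fracQ, ← map_smul QLmk, Algebra.smul_def (A := KΛ), map_mul (algebraMap Λ KΛ),
    mul_div_assoc]

lemma qbar_fracQ (P Q : Λ) : qbar (fracQ P Q) = fracQ (lbar P) (lbar Q) := by
  rw [fracQ, fracQ, qbar_mk, map_div₀, kbar_algebraMap, kbar_algebraMap]

lemma QLmk_eq_zero_iff (x : KΛ) : QLmk x = 0 ↔ ∃ R : Λ, algebraMap Λ KΛ R = x :=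
  Submodule.Quotient.mk_eq_zero _

lemma fracQ_eq_zero_iff {Q : Λ} (hQ : Q ≠ 0) (P : Λ) : fracQ P Q = 0 ↔ Q ∣ P := by
  have hQ' : algebraMap Λ KΛ Q ≠ 0 := (map_ne_zero_iff _ (IsFractionRing.injective Λ KΛ)).2 hQ
  rw [fracQ, QLmk_eq_zero_iff]
  simp only [eq_div_iff hQ', ← map_mul, (IsFractionRing.injective Λ KΛ).eq_iff, dvd_def,
    mul_comm _ Q, eq_comm]

lemma exists_fracQ_of_smul_eq_zero {Q : Λ} (hQ : Q ≠ 0) {ξ : QL} (h : Q • ξ = 0) :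
    ∃ P : Λ, ξ = fracQ P Q := by
  induction ξ using Submodule.Quotient.induction_on with | _ a => ?_
  obtain ⟨P, hP⟩ := (QLmk_eq_zero_iff (Q • a)).1 h
  have hQ' : algebraMap Λ KΛ Q ≠ 0 := (map_ne_zero_iff _ (IsFractionRing.injective Λ KΛ)).2 hQ
  refine ⟨P, congrArg QLmk ?_⟩
  rw [eq_div_iff hQ', hP, Algebra.smul_def, mul_comm]

namespace HermForm

variable {A : Type*} [AddCommGroup A] [Module Λ A] (φ : HermForm A)

lemma bil_zero_left (y : A) : φ.bil 0 y = 0 := by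
  simpa using φ.smul_left 0 0 y

lemma bil_add_right (x y z : A) : φ.bil x (y + z) = φ.bil x y + φ.bil x z := by
  rw [φ.conj_symm, φ.add_left, qbar_add, ← φ.conj_symm, ← φ.conj_symm]

lemma bil_smul_right (r : Λ) (x y : A) : φ.bil x (r • y) = lbar r • φ.bil x y := by
  rw [φ.conj_symm, φ.smul_left, qbar_smul, ← φ.conj_symm]

lemma bil_add_smul_self (x y : A) (r : Λ) :
    φ.bil (x + r • y) (x + r • y) =
      φ.bil x x + lbar r • φ.bil x y + r • φ.bil y x + (r * lbar r) • φ.bil y y := by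
  simp only [φ.add_left, φ.smul_left, bil_add_right, bil_smul_right, smul_add, smul_smul]
  abel

lemma exists_bil_eq_fracQ {D : Λ} (hD : D ≠ 0) {x : A} (hx : D • x = 0) (y : A) :
    ∃ P : Λ, φ.bil x y = fracQ P D :=
  exists_fracQ_of_smul_eq_zero hD (by rw [← φ.smul_left, hx, bil_zero_left])

lemma bil_add_smul_self_eq_fracQ {D s a b : Λ} (hD : SymmL D) {x y : A}
    (hxx : φ.bil x x = fracQ s D) (hxy : φ.bil x y = fracQ a D) (hyy : φ.bil y y = fracQ b D)
    (r : Λ) :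
    φ.bil (x + r • y) (x + r • y) = fracQ (s + lbar r * a + r * lbar a + r * lbar r * b) D := by
  have hyx : φ.bil y x = fracQ (lbar a) D := by rw [φ.conj_symm, hxy, qbar_fracQ, hD]
  rw [bil_add_smul_self, hxx, hxy, hyx, hyy, smul_fracQ, smul_fracQ, smul_fracQ, fracQ_add,
    fracQ_add, fracQ_add]

lemma exists_bil_eq_fracQ_not_dvd (hφ : φ.Nondeg) {p q : Λ} (hp : p ≠ 0)
    (htors : ∀ v : A, (p * q) • v = 0) {x : A} (hx : q • x ≠ 0) :
    ∃ (y : A) (a : Λ), ¬ p ∣ a ∧ φ.bil x y = fracQ a (p * q) := by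
  have hq : q ≠ 0 := by rintro rfl; exact hx (zero_smul Λ x)
  have hpq : p * q ≠ 0 := mul_ne_zero hp hq
  obtain ⟨y, hy⟩ : ∃ y, φ.bil (q • x) y ≠ 0 := by
    by_contra! h
    exact hx (hφ _ h)
  obtain ⟨a, ha⟩ := φ.exists_bil_eq_fracQ hpq (htors x) y
  refine ⟨y, a, fun hpa => hy ?_, ha⟩
  rw [φ.smul_left, ha, smul_fracQ, fracQ_eq_zero_iff hpq, mul_comm q]
  exact mul_dvd_mul_right hpa q

theorem exists_bil_self_eq_fracQ_not_dvd (hφ : φ.Nondeg) {p q : Λ} (hp : Prime p)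
    (hpbar : p ∣ lbar p) (hD : SymmL (p * q)) (htors : ∀ v : A, (p * q) • v = 0) {x : A}
    (hx : q • x ≠ 0) :
    ∃ (γ : A) (P : Λ), ¬ p ∣ P ∧ φ.bil γ γ = fracQ P (p * q) := by
  have hpq : p * q ≠ 0 := mul_ne_zero hp.ne_zero (by rintro rfl; exact hx (zero_smul Λ x))
  obtain ⟨y, a, ha, hxy⟩ := φ.exists_bil_eq_fracQ_not_dvd hφ hp.ne_zero htors hx
  obtain ⟨s, hxx⟩ := φ.exists_bil_eq_fracQ hpq (htors x) x
  obtain ⟨b, hyy⟩ := φ.exists_bil_eq_fracQ hpq (htors y) y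
  have h2m : ¬ p ∣ 2 * (a * lbar a) := fun h =>
    (hp.dvd_or_dvd h).elim (not_dvd_two hp) (not_dvd_mul_lbar hp hpbar ha)
  -- `c` is taken in `ℕ` so that `c̄ = c`
  obtain ⟨c, hc⟩ := exists_natCast_not_dvd_quadratic hp (not_dvd_two hp) h2m s (a * lbar a * b)
  refine ⟨x + (c * a) • y, _, hc, ?_⟩
  have hnum : s + lbar (c * a) * a + c * a * lbar a + c * a * lbar (c * a) * b =
      s + c * (2 * (a * lbar a)) + c ^ 2 * (a * lbar a * b) := by
    rw [map_mul, map_natCast]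
    ring
  rw [φ.bil_add_smul_self_eq_fracQ hD hxx hxy hyy, hnum]

end HermForm

theorem stmt_17_general (π : Λ) (hπ : (Irreducible π ∧ SymmL π) ∨ π = tΛ + 2 + T (-1))
    (I : Type) (n : I → ℕ) (hn : ∀ i, 0 < n i)
    (N : ℕ) (hNub : ∀ i, n i ≤ N) (hNmem : ∃ i, n i = N)
    (φ : HermForm (∀ i : I, Λ ⧸ (Ideal.span {π ^ n i} : Ideal Λ)))
    (hnd : φ.Nondeg) :
    ∃ (γ : ∀ i : I, Λ ⧸ (Ideal.span {π ^ n i} : Ideal Λ)) (P : Λ),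
      IsCoprime P π ∧ φ.bil γ γ = fracQ P (π ^ N) := by
  classical
  obtain ⟨p, e, hp, hpbar, he, hpe⟩ := exists_prime_associated_pow hπ
  obtain ⟨i₀, rfl⟩ := hNmem
  have hsym : SymmL π := by
    rcases hπ with ⟨-, h⟩ | rfl
    exacts [h, symmL_tΛ_add_two_add_T_neg_one]
  have hπN : π ^ n i₀ ≠ 0 := pow_ne_zero _ (hpe.ne_zero_iff.1 (pow_ne_zero _ hp.ne_zero))
  obtain ⟨q, hq⟩ : p ∣ π ^ n i₀ :=
    (hpe.dvd_iff_dvd_right.1 (dvd_pow_self p he.ne')).pow (hn i₀).ne'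
  have hx : q • (Pi.single i₀ 1 : ∀ i, Λ ⧸ Ideal.span {π ^ n i}) ≠ 0 := by
    rw [Ne, smul_single_one_eq_zero_iff (fun i => π ^ n i) i₀ q, hq]
    exact hp.not_mul_dvd_right (right_ne_zero_of_mul (hq ▸ hπN))
  obtain ⟨γ, P, hP, hγ⟩ := φ.exists_bil_self_eq_fracQ_not_dvd hnd hp hpbar
    (by rw [← hq, SymmL, map_pow, hsym]) (hq ▸ smul_eq_zero_of_forall_dvd
      (fun i => pow_dvd_pow π (hNub i))) hx
  exact ⟨γ, P, isCoprime_of_not_dvd_of_associated_pow hp hpe hP, hq ▸ hγ⟩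

/-- existence of an element of maximal order with
`φ(γ,γ) = P/πⁿ`, `P` coprime to `π`. -/
theorem stmt_17 (π : Λ) (hπ : (Irreducible π ∧ SymmL π) ∨ π = tΛ + 2 + T (-1))
    (I : Type) [Fintype I] [Nonempty I] (n : I → ℕ) (hn : ∀ i, 0 < n i)
    (N : ℕ) (hNub : ∀ i, n i ≤ N) (hNmem : ∃ i, n i = N)
    (φ : HermForm (∀ i : I, Λ ⧸ (Ideal.span {π ^ n i} : Ideal Λ)))
    (hnd : φ.Nondeg) :
    ∃ (γ : ∀ i : I, Λ ⧸ (Ideal.span {π ^ n i} : Ideal Λ)) (P : Λ),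
      IsCoprime P π ∧ φ.bil γ γ = fracQ P (π ^ N) :=
  stmt_17_general π hπ I n hn N hNub hNmem φ hnd
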